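/- Let A, S be real n×n matrices and suppose there exist constants C ≥ 0 and λ > 0 such that ‖exp(tA)‖ ≤ C * Real.exp(−λ t) for all t ≥ 0. Then the function s ↦ exp(sA) * (S * Sᵀ) * exp(sAᵀ) is integrable on [0, ∞), and the matrix P∞ = ∫ s in Set.Ici (0:ℝ), exp(sA) * (S * Sᵀ) * exp(sAᵀ) ds satisfies the algebraic Lyapunov equation A * P∞ + P∞ * Aᵀ + S * Sᵀ = 0. (The fluctuation–dissipation relation used to determine the noise matrix S from the stationary covariance.) -/

import Mathlib

/-!
With `F t = exp (t • A) * Q * exp (t • B)` one has `F' = A F + F B`, and `F` decays exponentially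
when both exponentials do, so integrating `F'` over `[0, ∞)` gives `A P + P B = -F 0 = -Q`.
For `B = Aᵀ` the decay of `exp (t • Aᵀ) = (exp (t • A))ᵀ` comes from that of `exp (t • A)`,
transposition being a bounded linear map on a finite-dimensional space.
-/

open scoped Matrix
open NormedSpace MeasureTheory

attribute [local instance] Matrix.linftyOpNormedRing Matrix.linftyOpNormedAlgebra

open Asymptotics Filter Set Topology

section Sylvester

variable {𝔸 : Type*} [NormedRing 𝔸] [NormedAlgebra ℝ 𝔸]

theorem exp_smul_mul_mul_exp_smul_isBigO {A Q B : 𝔸} {lam mu : ℝ}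
    (hA : (fun t : ℝ => exp (t • A)) =O[atTop] fun t => Real.exp (-lam * t))
    (hB : (fun t : ℝ => exp (t • B)) =O[atTop] fun t => Real.exp (-mu * t)) :
    (fun t : ℝ => exp (t • A) * Q * exp (t • B)) =O[atTop]
      fun t => Real.exp (-(lam + mu) * t) := by
  refine ((hA.mul (isBigO_const_const Q one_ne_zero atTop)).mul hB).congr_right fun t => ?_
  rw [mul_one, ← Real.exp_add]
  ring_nf

variable [CompleteSpace 𝔸]

theorem hasDerivAt_exp_smul_mul_mul_exp_smul (A Q B : 𝔸) (t : ℝ) :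
    HasDerivAt (fun s : ℝ => exp (s • A) * Q * exp (s • B))
      (A * (exp (t • A) * Q * exp (t • B)) + exp (t • A) * Q * exp (t • B) * B) t :=
  (((hasDerivAt_exp_smul_const' A t).mul_const Q).mul
    (hasDerivAt_exp_smul_const B t)).congr_deriv (by simp only [mul_assoc])

theorem mul_integral_Ioi_add_integral_Ioi_mul_add_eq_zero {F : ℝ → 𝔸} {A B : 𝔸}
    (hderiv : ∀ t ∈ Ici (0 : ℝ), HasDerivAt F (A * F t + F t * B) t)
    (hint : IntegrableOn F (Ioi 0)) (htend : Tendsto F atTop (𝓝 0)) :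
    A * (∫ t in Ioi (0 : ℝ), F t) + (∫ t in Ioi (0 : ℝ), F t) * B + F 0 = 0 := by
  have hintA : IntegrableOn (fun t => A * F t) (Ioi 0) := hint.const_mul A
  have hintB : IntegrableOn (fun t => F t * B) (Ioi 0) := hint.mul_const B
  have hmulA : ∫ t in Ioi (0 : ℝ), A * F t = A * ∫ t in Ioi (0 : ℝ), F t :=
    (ContinuousLinearMap.mul ℝ 𝔸 A).integral_comp_comm hint
  have hmulB : ∫ t in Ioi (0 : ℝ), F t * B = (∫ t in Ioi (0 : ℝ), F t) * B :=
    ((ContinuousLinearMap.mul ℝ 𝔸).flip B).integral_comp_comm hint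
  have hftc := integral_Ioi_of_hasDerivAt_of_tendsto' hderiv (hintA.add hintB) htend
  rw [integral_add hintA hintB, hmulA, hmulB] at hftc
  rw [hftc, zero_sub, neg_add_cancel]

variable {A Q B : 𝔸} {lam mu : ℝ}

theorem integrableOn_Ici_exp_smul_mul_mul_exp_smul (hpos : 0 < lam + mu)
    (hA : (fun t : ℝ => exp (t • A)) =O[atTop] fun t => Real.exp (-lam * t))
    (hB : (fun t : ℝ => exp (t • B)) =O[atTop] fun t => Real.exp (-mu * t)) :
    IntegrableOn (fun t : ℝ => exp (t • A) * Q * exp (t • B)) (Ici 0) :=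
  (continuous_iff_continuousAt.2 fun t =>
      (hasDerivAt_exp_smul_mul_mul_exp_smul A Q B t).continuousAt).locallyIntegrable
    |>.locallyIntegrableOn _
    |>.integrableOn_of_isBigO_atTop (exp_smul_mul_mul_exp_smul_isBigO hA hB)
      ⟨Ioi 0, Ioi_mem_atTop 0, exp_neg_integrableOn_Ioi 0 hpos⟩

theorem sylvester_integral_exp_smul_mul_mul_exp_smul (hpos : 0 < lam + mu)
    (hA : (fun t : ℝ => exp (t • A)) =O[atTop] fun t => Real.exp (-lam * t))
    (hB : (fun t : ℝ => exp (t • B)) =O[atTop] fun t => Real.exp (-mu * t)) :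
    A * (∫ t in Ici (0 : ℝ), exp (t • A) * Q * exp (t • B)) +
      (∫ t in Ici (0 : ℝ), exp (t • A) * Q * exp (t • B)) * B + Q = 0 := by
  have hdecay : Tendsto (fun t : ℝ => Real.exp (-(lam + mu) * t)) atTop (𝓝 0) :=
    Real.tendsto_exp_atBot.comp (tendsto_id.const_mul_atTop_of_neg (by linarith))
  simpa [integral_Ici_eq_integral_Ioi] using mul_integral_Ioi_add_integral_Ioi_mul_add_eq_zero
    (fun t _ => hasDerivAt_exp_smul_mul_mul_exp_smul A Q B t)
    ((integrableOn_Ici_exp_smul_mul_mul_exp_smul hpos hA hB).mono_set Ioi_subset_Ici_self)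
    ((exp_smul_mul_mul_exp_smul_isBigO hA hB).trans_tendsto hdecay)

end Sylvester

theorem Matrix.transpose_isBigO {𝕜 m α : Type*} [NontriviallyNormedField 𝕜] [CompleteSpace 𝕜]
    [Fintype m] [DecidableEq m] (f : α → Matrix m m 𝕜) (l : Filter α) :
    (fun x => (f x)ᵀ) =O[l] f :=
  (LinearMap.toContinuousLinearMap (Matrix.transposeLinearEquiv m m 𝕜 𝕜).toLinearMap).isBigO_comp
    f l

theorem fluctuation_dissipation_general (n : ℕ) (A S : Matrix (Fin n) (Fin n) ℝ)
    (C lam : ℝ) (hlam : 0 < lam)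
    (hstab : ∀ t : ℝ, 0 ≤ t → ‖exp (t • A)‖ ≤ C * Real.exp (-lam * t)) :
    @IntegrableOn _ _ _ _ SeminormedAddGroup.toContinuousENorm (fun s : ℝ => exp (s • A) * (S * Sᵀ) * exp (s • Aᵀ))
        (Set.Ici (0:ℝ)) volume ∧
      A * (∫ s in Set.Ici (0:ℝ), exp (s • A) * (S * Sᵀ) * exp (s • Aᵀ)) +
        (∫ s in Set.Ici (0:ℝ), exp (s • A) * (S * Sᵀ) * exp (s • Aᵀ)) * Aᵀ +
        S * Sᵀ = 0 := by
  have hA : (fun t : ℝ => exp (t • A)) =O[atTop] fun t => Real.exp (-lam * t) :=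
    IsBigO.of_bound C <| (eventually_ge_atTop 0).mono fun t ht => by
      rw [Real.norm_of_nonneg (Real.exp_pos _).le]
      exact hstab t ht
  have hAT : (fun t : ℝ => exp (t • Aᵀ)) =O[atTop] fun t => Real.exp (-lam * t) := by
    simp_rw [← Matrix.transpose_smul, Matrix.exp_transpose]
    exact (Matrix.transpose_isBigO _ _).trans hA
  have hpos : 0 < lam + lam := by linarith
  exact ⟨integrableOn_Ici_exp_smul_mul_mul_exp_smul hpos hA hAT,
    sylvester_integral_exp_smul_mul_mul_exp_smul hpos hA hAT⟩

/-- The fluctuation–dissipation relation: under exponential stability of `A`, the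
integrand of the stationary covariance is integrable on `[0, ∞)` and
`P∞ = ∫_0^∞ exp(sA) S Sᵀ exp(sAᵀ) ds` satisfies the algebraic Lyapunov equation
`A P∞ + P∞ Aᵀ + S Sᵀ = 0`. -/
theorem fluctuation_dissipation (n : ℕ) (A S : Matrix (Fin n) (Fin n) ℝ)
    (C lam : ℝ) (hC : 0 ≤ C) (hlam : 0 < lam)
    (hstab : ∀ t : ℝ, 0 ≤ t → ‖exp (t • A)‖ ≤ C * Real.exp (-lam * t)) :
    @IntegrableOn _ _ _ _ SeminormedAddGroup.toContinuousENorm (fun s : ℝ => exp (s • A) * (S * Sᵀ) * exp (s • Aᵀ))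
        (Set.Ici (0:ℝ)) volume ∧
      A * (∫ s in Set.Ici (0:ℝ), exp (s • A) * (S * Sᵀ) * exp (s • Aᵀ)) +
        (∫ s in Set.Ici (0:ℝ), exp (s • A) * (S * Sᵀ) * exp (s • Aᵀ)) * Aᵀ +
        S * Sᵀ = 0 :=
  fluctuation_dissipation_general n A S C lam hlam hstab
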